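/- In a finite Markov chain, if the unsafe set B = {s : ¬p(s)} is reachable from s_0 (via a path of positive-probability transitions), then the satisfaction probability of □p from s_0 is strictly less than 1. -/
import Mathlib


/-- In a finite Markov chain, if the unsafe set `{s : ¬ p s}` is reachable from `s₀`
via positive-probability transitions, the satisfaction probability of `□p` from `s₀`
is strictly less than `1`. -/
theorem safety_prob_lt_one_of_unsafe_reachable {S : Type*} [Fintype S] (Pr : S → S → ℝ)
    (hnonneg : ∀ s s', 0 ≤ Pr s s') (hrow : ∀ s, ∑ s', Pr s s' = 1)
    (p : S → Prop) [DecidablePred p]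
    (q : ℕ → S → ℝ)
    (hq0 : ∀ s, q 0 s = if p s then 1 else 0)
    (hqsucc : ∀ n s, q (n + 1) s = (if p s then 1 else 0) * ∑ s', Pr s s' * q n s')
    (s₀ : S)
    (hreach : ∃ s', Relation.ReflTransGen (fun a b => 0 < Pr a b) s₀ s' ∧ ¬ p s') :
    (⨅ n, q n s₀) < 1 := by
  have hnn : ∀ n s, 0 ≤ q n s := by
    intro n
    induction n with
    | zero => intro s; rw [hq0]; positivity
    | succ n ih =>
      intro s
      rw [hqsucc]
      apply mul_nonneg (by positivity)
      exact Finset.sum_nonneg fun s' _ => mul_nonneg (hnonneg s s') (ih s')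
  have hle1 : ∀ n s, q n s ≤ 1 := by
    intro n
    induction n with
    | zero => intro s; rw [hq0]; split <;> norm_num
    | succ n ih =>
      intro s
      rw [hqsucc]
      calc (if p s then (1:ℝ) else 0) * ∑ s', Pr s s' * q n s'
          ≤ 1 * ∑ s', Pr s s' * 1 := by
            apply mul_le_mul
            · split <;> norm_num
            · exact Finset.sum_le_sum fun s' _ =>
                mul_le_mul_of_nonneg_left (ih s') (hnonneg s s')
            · exact Finset.sum_nonneg fun s' _ => mul_nonneg (hnonneg s s') (hnn n s')
            · norm_num
        _ = 1 := by simp [hrow s]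
  obtain ⟨s', hpath, hns⟩ := hreach
  have key : ∃ N, q N s₀ < 1 := by
    induction hpath using Relation.ReflTransGen.head_induction_on with
    | refl => exact ⟨0, by rw [hq0, if_neg hns]; norm_num⟩
    | head hab _ ih =>
      rename_i a b _
      obtain ⟨N, hN⟩ := ih
      refine ⟨N + 1, ?_⟩
      rw [hqsucc]
      by_cases hpa : p a
      · rw [if_pos hpa, one_mul]
        have hlt : ∑ s', Pr a s' * q N s' < ∑ s', Pr a s' * 1 := by
          apply Finset.sum_lt_sum
          · exact fun s' _ => mul_le_mul_of_nonneg_left (hle1 N s') (hnonneg a s')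
          · exact ⟨b, Finset.mem_univ b, by
              exact mul_lt_mul_of_pos_left hN hab⟩
        simpa [hrow a] using hlt
      · rw [if_neg hpa, zero_mul]; norm_num
  obtain ⟨N, hN⟩ := key
  have hbdd : BddBelow (Set.range fun n => q n s₀) := by
    refine ⟨0, ?_⟩
    rintro x ⟨n, rfl⟩
    exact hnn n s₀
  exact lt_of_le_of_lt (ciInf_le hbdd N) hN
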